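/- If A is a right strongly semiprime ring, then A is a right non-singular semiprime ring which does not contain an infinite direct sum of nonzero two-sided ideals. -/

import Mathlib

open MulOpposite

namespace TugPaper

universe u v

/-- A submodule `N` of `M` is essential if it intersects every nonzero submodule nontrivially. -/
def IsEssentialSubmodule {R : Type*} {M : Type*} [Ring R] [AddCommGroup M] [Module R M]
    (N : Submodule R M) : Prop :=
  ∀ Z : Submodule R M, Z ≠ ⊥ → N ⊓ Z ≠ ⊥

/-- The right annihilator `r(x) = {a : A | x·a = 0}` of an element `x` of a right `A`-module,
as a right ideal of `A` (i.e. a submodule of `A` viewed as a right module over itself). -/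
def rAnn (A : Type*) [Ring A] {M : Type*} [AddCommGroup M] [Module Aᵐᵒᵖ M] (x : M) :
    Submodule Aᵐᵒᵖ A where
  carrier := {a : A | op a • x = 0}
  zero_mem' := by simp
  add_mem' := by
    intro a b ha hb
    simp only [Set.mem_setOf_eq] at *
    rw [op_add, add_smul, ha, hb, add_zero]
  smul_mem' := by
    intro c a ha
    simp only [Set.mem_setOf_eq] at *
    have : (c • a : A) = a * c.unop := rfl
    rw [this]
    have h2 : op (a * c.unop) = op c.unop * op a := by simp
    rw [h2, mul_smul, ha, smul_zero]

/-- A right `A`-module `M` is non-singular if its singular submodule is zero, i.e. the only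
element whose right annihilator is an essential right ideal is `0`. -/
def IsNonsingular (A : Type*) [Ring A] (M : Type*) [AddCommGroup M] [Module Aᵐᵒᵖ M] : Prop :=
  ∀ x : M, IsEssentialSubmodule (rAnn A x) → x = 0

/-- The Goldie radical of a right `A`-module `M`: the intersection of all submodules `Y`
such that `M/Y` is non-singular. -/
def goldieRadical (A : Type*) [Ring A] (M : Type*) [AddCommGroup M] [Module Aᵐᵒᵖ M] :
    Submodule Aᵐᵒᵖ M :=
  sInf {Y : Submodule Aᵐᵒᵖ M | IsNonsingular A (M ⧸ Y)}

/-- A right `A`-module `M` is automorphism-invariant: for every injective module `Q`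
containing (a copy of) `M` as an essential submodule, every automorphism of `Q` maps `M`
into `M`. -/
def AutomorphismInvariant (A : Type u) [Ring A] (M : Type v) [AddCommGroup M]
    [Module Aᵐᵒᵖ M] : Prop :=
  ∀ (Q : Type v) [AddCommGroup Q] [Module Aᵐᵒᵖ Q], Module.Injective Aᵐᵒᵖ Q →
    ∀ i : M →ₗ[Aᵐᵒᵖ] Q, Function.Injective i →
      IsEssentialSubmodule (LinearMap.range i) →
        ∀ g : Q ≃ₗ[Aᵐᵒᵖ] Q, ∀ m : M, ∃ m' : M, g (i m) = i m'

/-- A module `M` is quasi-injective if every homomorphism from a submodule of `M` into `M`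
extends to an endomorphism of `M`. -/
def QuasiInjective (A : Type*) [Ring A] (M : Type*) [AddCommGroup M] [Module Aᵐᵒᵖ M] : Prop :=
  ∀ (N : Submodule Aᵐᵒᵖ M) (f : N →ₗ[Aᵐᵒᵖ] M), ∃ g : M →ₗ[Aᵐᵒᵖ] M, ∀ n : N, g n = f n

/-- A right ideal of `A` is two-sided if it is also closed under left multiplication. -/
def IsTwoSided (A : Type*) [Ring A] (I : Submodule Aᵐᵒᵖ A) : Prop :=
  ∀ a : A, ∀ x ∈ I, a * x ∈ I

/-- A ring `A` is right strongly semiprime if every two-sided ideal of `A` which is essential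
as a right ideal contains a finite subset with zero right annihilator. -/
def RightStronglySemiprime (A : Type*) [Ring A] : Prop :=
  ∀ I : Submodule Aᵐᵒᵖ A, IsTwoSided A I → IsEssentialSubmodule I →
    ∃ S : Finset A, (S : Set A) ⊆ (I : Set A) ∧ ∀ a : A, (∀ s ∈ S, s * a = 0) → a = 0

/-- A ring is semiprime if it has no nonzero two-sided ideal with zero square. -/
def SemiprimeRing (A : Type*) [Ring A] : Prop :=
  ∀ I : Submodule Aᵐᵒᵖ A, IsTwoSided A I → (∀ x ∈ I, ∀ y ∈ I, x * y = 0) → I = ⊥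

/-- The ring `A` does not contain an infinite direct sum of nonzero two-sided ideals. -/
def NoInfiniteIdealDirectSum (A : Type*) [Ring A] : Prop :=
  ¬ ∃ I : ℕ → Submodule Aᵐᵒᵖ A,
      (∀ n, IsTwoSided A (I n)) ∧ (∀ n, I n ≠ ⊥) ∧
        ∀ n, I n ⊓ (⨆ m ∈ {m : ℕ | m ≠ n}, I m) = ⊥

/-- A module is square-free if it does not contain a direct sum of two nonzero isomorphic
submodules. -/
def SquareFreeModule (A : Type*) [Ring A] (M : Type*) [AddCommGroup M] [Module Aᵐᵒᵖ M] : Prop :=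
  ¬ ∃ D₁ D₂ : Submodule Aᵐᵒᵖ M,
      D₁ ≠ ⊥ ∧ D₂ ≠ ⊥ ∧ D₁ ⊓ D₂ = ⊥ ∧ Nonempty (D₁ ≃ₗ[Aᵐᵒᵖ] D₂)

/-- A module is uniform if any two nonzero submodules have nonzero intersection. -/
def UniformModule (A : Type*) [Ring A] (M : Type*) [AddCommGroup M] [Module Aᵐᵒᵖ M] : Prop :=
  ∀ N₁ N₂ : Submodule Aᵐᵒᵖ M, N₁ ≠ ⊥ → N₂ ≠ ⊥ → N₁ ⊓ N₂ ≠ ⊥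

/-- `N` is an essential submodule of `P` (both submodules of an ambient module). -/
def EssentialIn {R : Type*} {M : Type*} [Ring R] [AddCommGroup M] [Module R M]
    (N P : Submodule R M) : Prop :=
  N ≤ P ∧ ∀ Z : Submodule R M, Z ≤ P → Z ≠ ⊥ → N ⊓ Z ≠ ⊥

/-- A submodule is closed if it has no proper essential extension inside the ambient module. -/
def ClosedSubmodule {R : Type*} {M : Type*} [Ring R] [AddCommGroup M] [Module R M]
    (N : Submodule R M) : Prop :=
  ∀ P : Submodule R M, EssentialIn N P → N = P

/-- A module is CS if every closed submodule is a direct summand. -/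
def CSModule (A : Type*) [Ring A] (M : Type*) [AddCommGroup M] [Module Aᵐᵒᵖ M] : Prop :=
  ∀ N : Submodule Aᵐᵒᵖ M, ClosedSubmodule N → ∃ P : Submodule Aᵐᵒᵖ M, IsCompl N P

/-- `X` is injective relative to `Y` (`Y`-injective): every homomorphism from a submodule of `Y`
into `X` extends to a homomorphism `Y → X`. -/
def RelativelyInjective (R : Type*) [Ring R] (Y X : Type*) [AddCommGroup Y] [Module R Y]
    [AddCommGroup X] [Module R X] : Prop :=
  ∀ (N : Submodule R Y) (f : N →ₗ[R] X), ∃ g : Y →ₗ[R] X, ∀ n : N, g n = f n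

/-! For a two-sided ideal `I`, the ideal `I ⊕ l(I)` is essential, so strong semiprimeness gives
a finite `S ⊆ I ⊕ l(I)` with `r(S) = 0`. On `I` each `s ∈ S` acts by left multiplication as its
`I`-component, so `I` contains a finite set `T` with `r(T) ∩ I = 0`.
* If `I² = 0`, then `I ⊆ r(T)`, so `I = 0`.
* If `I = Sing(A)`, then `r(T)` is a finite intersection of essential right ideals, hence
  essential, and it meets `I` trivially, so `I = 0`.
* If `I = ⊕ Iₙ`, then `T` lies in finitely many summands, and for any other summand `I_N` we get
  `T I_N ⊆ I_N ∩ ⊕_{n ≠ N} Iₙ = 0`, i.e. `I_N ⊆ r(T) ∩ I = 0`. -/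

section Essential

variable {R M M' : Type*} [Ring R] [AddCommGroup M] [Module R M] [AddCommGroup M'] [Module R M']

theorem isEssentialSubmodule_iff_exists_smul {N : Submodule R M} :
    IsEssentialSubmodule N ↔ ∀ x : M, x ≠ 0 → ∃ r : R, r • x ∈ N ∧ r • x ≠ 0 := by
  constructor
  · intro hN x hx
    have hspan : N ⊓ R ∙ x ≠ ⊥ := hN _ (by simpa using hx)
    obtain ⟨y, ⟨hyN, hyx⟩, hy⟩ := (Submodule.ne_bot_iff _).1 hspan
    obtain ⟨r, rfl⟩ := Submodule.mem_span_singleton.1 hyx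
    exact ⟨r, hyN, hy⟩
  · intro h Z hZ hbot
    obtain ⟨x, hxZ, hx⟩ := (Submodule.ne_bot_iff Z).1 hZ
    obtain ⟨r, hrN, hr⟩ := h x hx
    exact hr ((Submodule.eq_bot_iff _).1 hbot _ ⟨hrN, Z.smul_mem r hxZ⟩)

theorem isEssentialSubmodule_top : IsEssentialSubmodule (⊤ : Submodule R M) := by
  intro Z hZ
  rwa [top_inf_eq]

theorem IsEssentialSubmodule.mono {N N' : Submodule R M} (hN : IsEssentialSubmodule N)
    (h : N ≤ N') : IsEssentialSubmodule N' :=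
  fun Z hZ hbot => hN Z hZ (eq_bot_iff.2 (hbot ▸ inf_le_inf_right Z h))

theorem IsEssentialSubmodule.inf {N N' : Submodule R M} (hN : IsEssentialSubmodule N)
    (hN' : IsEssentialSubmodule N') : IsEssentialSubmodule (N ⊓ N') := by
  intro Z hZ
  rw [inf_assoc]
  exact hN _ (hN' Z hZ)

theorem isEssentialSubmodule_finsetInf {ι : Type*} {s : Finset ι} {N : ι → Submodule R M}
    (h : ∀ i ∈ s, IsEssentialSubmodule (N i)) : IsEssentialSubmodule (s.inf N) := by
  classical
  induction s using Finset.induction_on with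
  | empty => exact isEssentialSubmodule_top
  | insert i s _ ih =>
    rw [Finset.inf_insert]
    exact (h i (s.mem_insert_self i)).inf (ih fun j hj => h j (Finset.mem_insert_of_mem hj))

theorem IsEssentialSubmodule.comap {N : Submodule R M'} (hN : IsEssentialSubmodule N)
    (f : M →ₗ[R] M') : IsEssentialSubmodule (N.comap f) := by
  rw [isEssentialSubmodule_iff_exists_smul] at hN ⊢
  intro x hx
  by_cases hfx : f x = 0
  · exact ⟨1, by simp [hfx], by simpa using hx⟩
  · obtain ⟨r, hrN, hr⟩ := hN _ hfx
    exact ⟨r, by simpa using hrN, fun h => hr (by rw [← map_smul, h, map_zero])⟩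

theorem IsEssentialSubmodule.eq_bot_of_inf_eq_bot {N P : Submodule R M}
    (hN : IsEssentialSubmodule N) (h : N ⊓ P = ⊥) : P = ⊥ := by
  by_contra hP
  exact hN P hP h

end Essential

section RightModule

variable {A : Type*} [Ring A]

theorem mem_rAnn {M : Type*} [AddCommGroup M] [Module Aᵐᵒᵖ M] {x : M} {a : A} :
    a ∈ rAnn A x ↔ op a • x = 0 :=
  Iff.rfl

theorem mem_rAnn_self {x a : A} : a ∈ rAnn A x ↔ x * a = 0 := by
  rw [mem_rAnn, op_smul_eq_mul]

theorem rAnn_op_smul {M : Type*} [AddCommGroup M] [Module Aᵐᵒᵖ M] (c : A) (x : M) :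
    rAnn A (op c • x) = (rAnn A x).comap (LinearMap.mulLeft Aᵐᵒᵖ c) := by
  ext a
  simp only [Submodule.mem_comap, LinearMap.mulLeft_apply, mem_rAnn, smul_smul, op_mul]

def singularSubmodule (A M : Type*) [Ring A] [AddCommGroup M] [Module Aᵐᵒᵖ M] :
    Submodule Aᵐᵒᵖ M where
  carrier := {x | IsEssentialSubmodule (rAnn A x)}
  zero_mem' := by
    have : rAnn A (0 : M) = ⊤ := by ext; simp [mem_rAnn]
    show IsEssentialSubmodule _
    rw [this]
    exact isEssentialSubmodule_top
  add_mem' {x y} hx hy :=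
    (IsEssentialSubmodule.inf hx hy).mono fun a ha => by
      obtain ⟨hax, hay⟩ := Submodule.mem_inf.1 ha
      rw [mem_rAnn] at hax hay ⊢
      rw [smul_add, hax, hay, add_zero]
  smul_mem' c x hx := by
    show IsEssentialSubmodule _
    rw [← op_unop c, rAnn_op_smul]
    exact IsEssentialSubmodule.comap hx _

theorem mem_singularSubmodule {M : Type*} [AddCommGroup M] [Module Aᵐᵒᵖ M] {x : M} :
    x ∈ singularSubmodule A M ↔ IsEssentialSubmodule (rAnn A x) :=
  Iff.rfl

theorem isNonsingular_iff_singularSubmodule_eq_bot {M : Type*} [AddCommGroup M]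
    [Module Aᵐᵒᵖ M] : IsNonsingular A M ↔ singularSubmodule A M = ⊥ := by
  simp only [IsNonsingular, Submodule.eq_bot_iff, mem_singularSubmodule]

end RightModule

section TwoSided

variable {A : Type*} [Ring A]

theorem isTwoSided_singularSubmodule : IsTwoSided A (singularSubmodule A A) := by
  intro a x hx
  refine IsEssentialSubmodule.mono hx fun b hb => ?_
  rw [mem_rAnn_self] at hb ⊢
  rw [mul_assoc, hb, mul_zero]

theorem IsTwoSided.sup {I J : Submodule Aᵐᵒᵖ A} (hI : IsTwoSided A I) (hJ : IsTwoSided A J) :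
    IsTwoSided A (I ⊔ J) := by
  intro a x hx
  obtain ⟨y, hy, z, hz, rfl⟩ := Submodule.mem_sup.1 hx
  rw [mul_add]
  exact Submodule.add_mem_sup (hI a y hy) (hJ a z hz)

theorem isTwoSided_iSup {ι : Sort*} {I : ι → Submodule Aᵐᵒᵖ A} (hI : ∀ i, IsTwoSided A (I i)) :
    IsTwoSided A (⨆ i, I i) := by
  intro a x hx
  refine Submodule.iSup_induction I (motive := fun x => a * x ∈ ⨆ i, I i) hx
    (fun i y hy => Submodule.mem_iSup_of_mem i (hI i a y hy)) (by simp) fun y z hy hz => ?_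
  rw [mul_add]
  exact Submodule.add_mem _ hy hz

/-- `l(I) = {a | a I = 0}`, a right ideal because `I` is a left ideal. -/
def lAnn {I : Submodule Aᵐᵒᵖ A} (hI : IsTwoSided A I) : Submodule Aᵐᵒᵖ A where
  carrier := {a | ∀ x ∈ I, a * x = 0}
  zero_mem' x _ := zero_mul x
  add_mem' {a b} ha hb x hx := by rw [add_mul, ha x hx, hb x hx, add_zero]
  smul_mem' c a ha x hx := by
    rw [← op_unop c, op_smul_eq_mul, mul_assoc]
    exact ha _ (hI _ x hx)

theorem mem_lAnn {I : Submodule Aᵐᵒᵖ A} {hI : IsTwoSided A I} {a : A} :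
    a ∈ lAnn hI ↔ ∀ x ∈ I, a * x = 0 :=
  Iff.rfl

theorem isTwoSided_lAnn {I : Submodule Aᵐᵒᵖ A} (hI : IsTwoSided A I) :
    IsTwoSided A (lAnn hI) := by
  intro a b hb x hx
  rw [mul_assoc, mem_lAnn.1 hb x hx, mul_zero]

theorem IsTwoSided.isEssentialSubmodule_sup_lAnn {I : Submodule Aᵐᵒᵖ A}
    (hI : IsTwoSided A I) : IsEssentialSubmodule (I ⊔ lAnn hI) := by
  rw [isEssentialSubmodule_iff_exists_smul]
  intro c hc
  by_cases hcI : ∀ x ∈ I, c * x = 0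
  · exact ⟨1, by simpa using Submodule.mem_sup_right (mem_lAnn.2 hcI), by simpa using hc⟩
  · push Not at hcI
    obtain ⟨x, hxI, hcx⟩ := hcI
    exact ⟨op x, by simpa using Submodule.mem_sup_left (hI c x hxI), by simpa using hcx⟩

end TwoSided

namespace RightStronglySemiprime

variable {A : Type*} [Ring A]

theorem exists_finset_subset_inf_rAnn_inf_eq_bot (hA : RightStronglySemiprime A)
    {I : Submodule Aᵐᵒᵖ A} (hI : IsTwoSided A I) :
    ∃ T : Finset A, (T : Set A) ⊆ I ∧ T.inf (fun t => rAnn A t) ⊓ I = ⊥ := by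
  obtain ⟨S, hSJ, hS⟩ := hA _ (hI.sup (isTwoSided_lAnn hI)) hI.isEssentialSubmodule_sup_lAnn
  have hcomponent : ∀ s : S, ∃ t ∈ I, ∀ x ∈ I, s * x = t * x := by
    rintro ⟨s, hs⟩
    obtain ⟨t, ht, b, hb, rfl⟩ := Submodule.mem_sup.1 (hSJ hs)
    exact ⟨t, ht, fun x hx => by rw [add_mul, mem_lAnn.1 hb x hx, add_zero]⟩
  choose t htI hst using hcomponent
  classical
  refine ⟨Finset.univ.image t, ?_, ?_⟩
  · intro _ ht
    obtain ⟨s, -, rfl⟩ := Finset.mem_image.1 ht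
    exact htI s
  rw [Submodule.eq_bot_iff]
  intro x hx
  obtain ⟨hxT, hxI⟩ := Submodule.mem_inf.1 hx
  rw [Submodule.mem_finsetInf] at hxT
  refine hS x fun s hs => ?_
  rw [hst ⟨s, hs⟩ x hxI]
  exact mem_rAnn_self.1 (hxT _ (Finset.mem_image_of_mem t (Finset.mem_univ _)))

theorem semiprimeRing (hA : RightStronglySemiprime A) : SemiprimeRing A := by
  intro I hI hsq
  obtain ⟨T, hTI, hT⟩ := hA.exists_finset_subset_inf_rAnn_inf_eq_bot hI
  refine eq_bot_iff.2 fun x hx => hT ▸ Submodule.mem_inf.2 ⟨?_, hx⟩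
  rw [Submodule.mem_finsetInf]
  exact fun t ht => mem_rAnn_self.2 (hsq t (hTI ht) x hx)

theorem isNonsingular (hA : RightStronglySemiprime A) : IsNonsingular A A := by
  rw [isNonsingular_iff_singularSubmodule_eq_bot]
  obtain ⟨T, hTZ, hT⟩ :=
    hA.exists_finset_subset_inf_rAnn_inf_eq_bot isTwoSided_singularSubmodule
  exact (isEssentialSubmodule_finsetInf fun t ht => hTZ ht).eq_bot_of_inf_eq_bot hT

theorem noInfiniteIdealDirectSum (hA : RightStronglySemiprime A) :
    NoInfiniteIdealDirectSum A := by
  rintro ⟨I, hI, hne, hdisj⟩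
  obtain ⟨T, hTI, hT⟩ := hA.exists_finset_subset_inf_rAnn_inf_eq_bot (isTwoSided_iSup hI)
  obtain ⟨F, hF⟩ := CompleteLattice.IsCompactElement.exists_finset_of_le_iSup _
    (Submodule.finset_span_isCompactElement T) I (Submodule.span_le.2 hTI)
  obtain ⟨N, hN⟩ := Infinite.exists_notMem_finset F
  have hFN : (⨆ n ∈ F, I n) ≤ ⨆ m ∈ {m | m ≠ N}, I m :=
    iSup₂_le fun n hn => le_iSup₂_of_le n (ne_of_mem_of_not_mem hn hN) le_rfl
  refine hne N (eq_bot_iff.2 fun x hx =>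
    hT ▸ Submodule.mem_inf.2 ⟨?_, Submodule.mem_iSup_of_mem N hx⟩)
  rw [Submodule.mem_finsetInf]
  intro t ht
  have htx : t * x ∈ I N ⊓ ⨆ m ∈ {m | m ≠ N}, I m := by
    refine Submodule.mem_inf.2 ⟨hI N t x hx, ?_⟩
    simpa only [op_smul_eq_mul] using
      Submodule.smul_mem _ (op x) (hFN (hF (Submodule.subset_span ht)))
  rw [hdisj N] at htx
  exact mem_rAnn_self.2 ((Submodule.mem_bot _).1 htx)

end RightStronglySemiprime

/-- **Lemma 2.6.** If `A` is a right strongly semiprime ring, then `A` is a right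
non-singular semiprime ring which does not contain an infinite direct sum of nonzero
two-sided ideals. -/
theorem stronglySemiprime_imp_nonsingular_semiprime_noInfiniteIdealSum
    (A : Type u) [Ring A] (hssp : RightStronglySemiprime A) :
    IsNonsingular A A ∧ SemiprimeRing A ∧ NoInfiniteIdealDirectSum A :=
  ⟨hssp.isNonsingular, hssp.semiprimeRing, hssp.noInfiniteIdealDirectSum⟩

end TugPaper
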